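/- In the full model M_G (one world w_r per run r ∈ R, with every world accessible from every world), the formula ◇σ holds in every world, and for each d ∈ D the world w_d satisfies σ; in particular σ is S5-consistent (¬σ is not valid in all equivalence models), even though □σ holds in no world of any reflexive transitive model. -/
import Mathlib


/-- Propositional modal formulas over the variables `Y_r`, `r ∈ R = Fin 6`
(`0 = Mo, 1 = Tu, 2 = We, 3 = Th, 4 = Fr, 5 = none`). -/
inductive MForm : Type where
  | bot : MForm
  | var : Fin 6 → MForm
  | imp : MForm → MForm → MForm
  | box : MForm → MForm
deriving DecidableEq

def MForm.neg (φ : MForm) : MForm := φ.imp .bot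
def MForm.top : MForm := MForm.neg .bot
def MForm.or (φ ψ : MForm) : MForm := φ.neg.imp ψ
def MForm.and (φ ψ : MForm) : MForm := (φ.imp ψ.neg).neg
/-- `◇φ := ¬□¬φ`. -/
def MForm.dia (φ : MForm) : MForm := (φ.neg.box).neg

/-- A Kripke model with world set `W`: accessibility relation `E` and
valuation `val`. -/
structure Kripke (W : Type) where
  E : W → W → Prop
  val : W → Fin 6 → Prop

/-- Satisfaction `M, w ⊨ φ`. -/
def MSat {W : Type} (M : Kripke W) : W → MForm → Prop
  | _, .bot => False
  | w, .var i => M.val w i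
  | w, .imp φ ψ => MSat M w φ → MSat M w ψ
  | w, .box φ => ∀ w', M.E w w' → MSat M w' φ

def bigOrM (l : List MForm) : MForm := l.foldr MForm.or .bot

/-- `⟨T > d⟩ = ⋁_{r > d} Y_r`. -/
def TGtM (d : Fin 6) : MForm :=
  bigOrM (((List.finRange 6).filter (fun r => d < r)).map MForm.var)

/-- `σ := ⋁_{d ∈ D} (⟨T = d⟩ ∧ ◇⟨T > d⟩)`, the "surprising test" formula. -/
def sigmaM : MForm :=
  bigOrM (((List.finRange 6).filter (fun d => d.val < 5)).map
    (fun d => (MForm.var d).and (MForm.dia (TGtM d))))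

/-- The full model `M_G`: one world per run, all worlds mutually accessible. -/
def MG : Kripke (Fin 6) where
  E := fun _ _ => True
  val := fun w r => w = r

lemma sat_or {W} (M : Kripke W) (w : W) (φ ψ : MForm) :
    MSat M w (φ.or ψ) ↔ MSat M w φ ∨ MSat M w ψ := by
  simp only [MForm.or, MForm.neg, MSat]; tauto

lemma sat_and {W} (M : Kripke W) (w : W) (φ ψ : MForm) :
    MSat M w (φ.and ψ) ↔ MSat M w φ ∧ MSat M w ψ := by
  simp only [MForm.and, MForm.neg, MSat]; tauto

lemma sat_dia {W} (M : Kripke W) (w : W) (φ : MForm) :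
    MSat M w φ.dia ↔ ∃ w', M.E w w' ∧ MSat M w' φ := by
  simp only [MForm.dia, MForm.neg, MSat]
  constructor
  · intro h
    by_contra hc
    push_neg at hc
    exact h (fun w' he hs => hc w' he hs)
  · rintro ⟨w', he, hs⟩ h
    exact h w' he hs

lemma sat_bigOr {W} (M : Kripke W) (w : W) (l : List MForm) :
    MSat M w (bigOrM l) ↔ ∃ φ ∈ l, MSat M w φ := by
  induction l with
  | nil => simp [bigOrM, MSat]
  | cons a t ih =>
    simp only [bigOrM, List.foldr_cons] at *
    rw [sat_or, ih]; simp

lemma sat_TGtM {W} (M : Kripke W) (w : W) (d : Fin 6) :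
    MSat M w (TGtM d) ↔ ∃ r, d < r ∧ M.val w r := by
  rw [TGtM, sat_bigOr]
  constructor
  · rintro ⟨φ, hφ, hs⟩
    simp only [List.mem_map, List.mem_filter, List.mem_finRange, true_and] at hφ
    obtain ⟨r, hr, rfl⟩ := hφ
    exact ⟨r, by simpa using hr, hs⟩
  · rintro ⟨r, hr, hv⟩
    exact ⟨MForm.var r, by simp [List.mem_filter, hr], hv⟩

lemma sat_sigma {W} (M : Kripke W) (w : W) :
    MSat M w sigmaM ↔ ∃ d : Fin 6, d.val < 5 ∧ M.val w d ∧
      ∃ w', M.E w w' ∧ ∃ r, d < r ∧ M.val w' r := by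
  rw [sigmaM, sat_bigOr]
  constructor
  · rintro ⟨φ, hφ, hs⟩
    simp only [List.mem_map, List.mem_filter, List.mem_finRange, true_and] at hφ
    obtain ⟨d, hd, rfl⟩ := hφ
    rw [sat_and, sat_dia] at hs
    obtain ⟨h1, w', he, h2⟩ := hs
    rw [sat_TGtM] at h2
    exact ⟨d, by simpa using hd, h1, w', he, h2⟩
  · rintro ⟨d, hd, hv, w', he, h2⟩
    refine ⟨_, List.mem_map.2 ⟨d, List.mem_filter.2 ⟨List.mem_finRange d, by simpa using hd⟩, rfl⟩, ?_⟩
    rw [sat_and, sat_dia]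
    exact ⟨hv, w', he, (sat_TGtM M w' d).2 h2⟩

/-- In `M_G`, `◇σ` holds in every world and `σ` holds in each day-world `w_d`;
in particular `σ` is S5-consistent (`¬σ` is not valid in all equivalence
models), even though `□σ` holds in no world of any reflexive transitive model
(satisfying `(Ax_{=1})` in each world). -/
theorem stmt_19 :
    (∀ w : Fin 6, MSat MG w (MForm.dia sigmaM)) ∧
    (∀ d : Fin 6, d.val < 5 → MSat MG d sigmaM) ∧
    ¬ (∀ (W : Type) (M : Kripke W), Equivalence M.E →
        ∀ w : W, MSat M w (sigmaM.neg)) ∧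
    (∀ (W : Type) (M : Kripke W), Transitive M.E → Reflexive M.E →
      (∀ w : W, ∃! r : Fin 6, M.val w r) →
      ∀ w : W, ¬ MSat M w (MForm.box sigmaM)) := by
  have sigma0 : ∀ d : Fin 6, d.val < 5 → MSat MG d sigmaM := by
    intro d hd
    rw [sat_sigma]
    refine ⟨d, hd, rfl, 5, trivial, 5, ?_, rfl⟩
    exact Fin.lt_def.2 (by omega)
  refine ⟨?_, sigma0, ?_, ?_⟩
  · intro w
    rw [sat_dia]
    exact ⟨0, trivial, sigma0 0 (by norm_num)⟩
  · intro h
    have := h (Fin 6) MG (by constructor <;> intros <;> trivial) 0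
    exact this (sigma0 0 (by norm_num)) 
  · intro W M htrans hrefl huniq w hbox
    have key : ∀ n : ℕ, n ≤ 6 → ∃ w', M.E w w' ∧ ∃ r : Fin 6, M.val w' r ∧ n ≤ r.val := by
      intro n
      induction n with
      | zero =>
        intro _
        obtain ⟨r, hr, -⟩ := huniq w
        exact ⟨w, hrefl w, r, hr, Nat.zero_le _⟩
      | succ k ih =>
        intro hk
        obtain ⟨w', he, r, hr, hkr⟩ := ih (by omega)
        have hs := hbox w' he
        rw [sat_sigma] at hs
        obtain ⟨d, hd5, hvd, w'', he', r', hdr', hvr'⟩ := hs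
        obtain ⟨rr, -, hu⟩ := huniq w'
        have : d = r := (hu d hvd).trans (hu r hr).symm
        subst this
        exact ⟨w'', htrans he he', r', hvr', by have := Fin.lt_def.1 hdr'; omega⟩
    obtain ⟨w', -, r, -, hr⟩ := key 6 le_rfl
    omega
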